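/- Let X be a Banach space, d ≥ 1, T_1,...,T_d : X → X commuting linear contractions, x ∈ X with ‖x‖ ≤ 1, and x_n := (n+1)^(−d) Σ_{k ∈ [0,n]^d} T^k x. With Φ(d,δ,Q) := max(Q, ⌈2^d Q/δ⌉), f(s) := 2s²+2s, G(ε,g) := ((f∘g)^M)^(⌈1/ε⌉)(0), h_{γ,g,d}(n) := Φ(d,γ/2,n) + g(Φ(d,γ/2,n)), and Ψ(d,γ,g) := Φ(d,γ/2, G(γ/2, h_{γ,g,d})), it holds that for every γ > 0 and every g : ℕ → ℕ there exists N ≤ Ψ(d,γ,g) such that for all i, j ∈ [N, N+g(N)], ‖x_i‖ ≤ ‖(x_i + x_j)/2‖ + γ. -/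

import Mathlib

/-- `box d n` is `[0,n]^d`. -/
def box (d n : ℕ) : Finset (Fin d → ℕ) := Fintype.piFinset fun _ => Finset.range (n+1)

/-- `Tpow T k = T₁^{k₁} ⋯ T_d^{k_d}`. -/
def Tpow {X : Type*} [AddCommGroup X] [Module ℝ X] {d : ℕ}
    (T : Fin d → X →ₗ[ℝ] X) (k : Fin d → ℕ) : X →ₗ[ℝ] X :=
  (List.ofFn fun l => T l ^ k l).prod

/-- The multi-parameter ergodic average `x_n = (n+1)^{-d} ∑_{k ∈ [0,n]^d} T^k x`. -/
noncomputable def erg {X : Type*} [AddCommGroup X] [Module ℝ X] {d : ℕ}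
    (T : Fin d → X →ₗ[ℝ] X) (x : X) (n : ℕ) : X :=
  ((n+1 : ℝ)^d)⁻¹ • ∑ k ∈ box d n, Tpow T k x

/-- `Φ(d,δ,Q) := max(Q, ⌈2^d Q / δ⌉)`. -/
noncomputable def Phi (d : ℕ) (δ : ℝ) (Q : ℕ) : ℕ := max Q ⌈(2^d * Q : ℝ) / δ⌉₊

/-- `iterMax g` is `g^M`, i.e. `g^M(n) = max_{i ≤ n} g(i)`. -/
def iterMax (g : ℕ → ℕ) (n : ℕ) : ℕ := Finset.sup (Finset.range (n+1)) g

/-- `f(s) := 2s² + 2s`. -/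
def fPair (s : ℕ) : ℕ := 2*s^2 + 2*s

/-- `G(ε,g) := ((f ∘ g)^M)^(⌈1/ε⌉)(0)`. -/
noncomputable def Gfun (ε : ℝ) (g : ℕ → ℕ) : ℕ := (iterMax (fPair ∘ g))^[⌈1/ε⌉₊] 0

/-- `h_{γ,g,d}(n) := Φ(d,γ/2,n) + g(Φ(d,γ/2,n))`. -/
noncomputable def hfun (γ : ℝ) (g : ℕ → ℕ) (d n : ℕ) : ℕ :=
  Phi d (γ/2) n + g (Phi d (γ/2) n)

/-- `Ψ(d,γ,g) := Φ(d,γ/2,G(γ/2,h_{γ,g,d}))`. -/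
noncomputable def Psi (d : ℕ) (γ : ℝ) (g : ℕ → ℕ) : ℕ :=
  Phi d (γ/2) (Gfun (γ/2) (hfun γ g d))

/-
Write `x_n = A_n x` with `A_n = ∏_l (n+1)⁻¹ ∑_{m ≤ n} T_l^m`, a product of commuting contractions.
The identity `(∑_{m ≤ M} T^m)(1 - T^q) = (∑_{r < q} T^r)(1 - T^(M+1))` gives
`‖A_N y - A_N A_n y‖ ≤ d n/(N+1) ‖y‖`. Hence `‖x_i‖ ≤ ‖x_n‖ + γ/4` as soon as `i ≥ Φ(n)`, and
`‖x_M‖ ≤ ‖(x_i + x_j)/2‖ + d c/(M+1)` whenever `i, j ≤ c`. If the conclusion failed for every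
`N ≤ Ψ`, then applying this to the window at `Φ(μ_k)`, where `μ_k = ((f ∘ h)^M)^(k)(0)`, would give
`‖x_{μ_{k+1}}‖ < ‖x_{μ_k}‖ - γ/2` for `1 ≤ k < ⌈2/γ⌉`, pushing `‖x_{μ_k}‖` below `γ/2`, while the
failing window at `Φ(μ_{⌈2/γ⌉}) ≤ Ψ` forces it above `3γ/4`.
-/

open Finset

theorem List.prod_ofFn_mul_prod_ofFn {M : Type*} [Monoid M] {d : ℕ} (f g : Fin d → M)
    (h : ∀ l m, l ≠ m → Commute (f l) (g m)) :
    (List.ofFn f).prod * (List.ofFn g).prod = (List.ofFn fun l => f l * g l).prod := by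
  induction d with
  | zero => simp
  | succ d ih =>
    have hc : Commute (List.ofFn fun i => f i.succ).prod (g 0) :=
      Commute.list_prod_left _ _ <|
        List.forall_mem_ofFn_iff.2 fun i => h _ _ (Fin.succ_ne_zero i)
    simp only [List.ofFn_succ, List.prod_cons]
    rw [← ih _ _ fun l m hlm => h _ _ (Fin.succ_injective _ |>.ne hlm), mul_assoc,
      ← mul_assoc _ (g 0), hc.eq, mul_assoc, mul_assoc]

theorem List.prod_ofFn_smul {R A : Type*} [CommSemiring R] [Semiring A] [Algebra R A] {d : ℕ}
    (c : R) (f : Fin d → A) : (List.ofFn fun l => c • f l).prod = c ^ d • (List.ofFn f).prod := by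
  induction d with
  | zero => simp
  | succ d ih => simp [List.ofFn_succ, ih, smul_smul, pow_succ]

theorem List.prod_ofFn_sum {R ι : Type*} [Semiring R] {d : ℕ} (s : Fin d → Finset ι)
    (f : Fin d → ι → R) :
    (List.ofFn fun l => ∑ i ∈ s l, f l i).prod
      = ∑ k ∈ Fintype.piFinset s, (List.ofFn fun l => f l (k l)).prod := by
  induction d with
  | zero => simp
  | succ d ih =>
    rw [List.ofFn_succ, List.prod_cons, ih, Finset.sum_mul_sum, ← Finset.sum_product']
    refine Finset.sum_nbij' (fun p => Fin.cons p.1 p.2) (fun k => (k 0, Fin.tail k))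
      ?_ ?_ ?_ ?_ ?_ <;> intro p hp
    · simpa [Fin.forall_fin_succ] using hp
    · simpa [Fin.forall_fin_succ, Fin.tail] using hp
    · simp
    · simp
    · simp [List.ofFn_succ]

section ErgodicAverage

variable {E : Type*} [AddCommGroup E] [Module ℝ E] {d : ℕ}

noncomputable def ergAvg (A : Module.End ℝ E) (N : ℕ) : Module.End ℝ E :=
  ((N : ℝ) + 1)⁻¹ • ∑ m ∈ range (N + 1), A ^ m

theorem Commute.ergAvg {A B : Module.End ℝ E} (h : Commute A B) (N M : ℕ) :
    Commute (ergAvg A N) (ergAvg B M) :=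
  ((Commute.sum_left _ _ _ fun i _ => Commute.sum_right _ _ _ fun j _ => h.pow_pow i j).smul_left
    _).smul_right _

lemma ergAvg_mul_one_sub_pow (A : Module.End ℝ E) (M q : ℕ) :
    ergAvg A M * (1 - A ^ q)
      = ((M : ℝ) + 1)⁻¹ • ((∑ i ∈ range q, A ^ i) * (1 - A ^ (M + 1))) := by
  have hc : Commute (∑ i ∈ range (M + 1), A ^ i) (∑ i ∈ range q, A ^ i) :=
    Commute.sum_left _ _ _ fun i _ => Commute.sum_right _ _ _ fun j _ => Commute.pow_pow_self A i j
  rw [ergAvg, smul_mul_assoc, ← geom_sum_mul_neg A q, ← geom_sum_mul_neg A (M + 1), ← mul_assoc,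
    ← mul_assoc, hc.eq]

noncomputable def multiAvg (T : Fin d → Module.End ℝ E) (N : ℕ) : Module.End ℝ E :=
  (List.ofFn fun l => ergAvg (T l) N).prod

lemma multiAvg_eq (T : Fin d → Module.End ℝ E) (N : ℕ) :
    multiAvg T N = (((N : ℝ) + 1) ^ d)⁻¹ • ∑ k ∈ box d N, Tpow T k := by
  simp only [multiAvg, ergAvg]
  rw [List.prod_ofFn_smul, List.prod_ofFn_sum, inv_pow]
  rfl

lemma erg_eq_multiAvg_apply (T : Fin d → Module.End ℝ E) (x : E) (N : ℕ) :
    erg T x N = multiAvg T N x := by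
  rw [erg, multiAvg_eq, LinearMap.smul_apply, LinearMap.sum_apply]

end ErgodicAverage

section Contractions

variable {X : Type*} [NormedAddCommGroup X] [NormedSpace ℝ X]

variable (X) in
def contractions : Submonoid (Module.End ℝ X) where
  carrier := {A | ∀ y, ‖A y‖ ≤ ‖y‖}
  one_mem' _ := le_rfl
  mul_mem' hA hB y := (hA _).trans (hB y)

lemma prod_ofFn_mem_contractions {d : ℕ} {f : Fin d → Module.End ℝ X}
    (hf : ∀ l, f l ∈ contractions X) : (List.ofFn f).prod ∈ contractions X :=
  Submonoid.list_prod_mem _ (List.forall_mem_ofFn_iff.2 hf)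

lemma norm_sum_apply_le_card_mul {ι : Type*} {s : Finset ι} {B : ι → Module.End ℝ X}
    (hB : ∀ i ∈ s, B i ∈ contractions X) (y : X) : ‖(∑ i ∈ s, B i) y‖ ≤ #s * ‖y‖ := by
  rw [LinearMap.sum_apply, ← nsmul_eq_mul, ← Finset.sum_const]
  exact norm_sum_le_of_le s fun i hi => hB i hi y

lemma norm_prod_ofFn_apply_sub_le {d : ℕ} {f g : Fin d → Module.End ℝ X} {ε : ℝ} (hε : 0 ≤ ε)
    (hf : ∀ l, f l ∈ contractions X) (hg : ∀ l, g l ∈ contractions X)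
    (hfg : ∀ l y, ‖f l y - g l y‖ ≤ ε * ‖y‖) (y : X) :
    ‖(List.ofFn f).prod y - (List.ofFn g).prod y‖ ≤ d * ε * ‖y‖ := by
  induction d with
  | zero => simp
  | succ d ih =>
    simp only [List.ofFn_succ, List.prod_cons, Module.End.mul_apply]
    set P := (List.ofFn fun i => f i.succ).prod y
    set Q := (List.ofFn fun i => g i.succ).prod y
    have hP : ‖P‖ ≤ ‖y‖ := prod_ofFn_mem_contractions (fun l => hf l.succ) y
    calc ‖f 0 P - g 0 Q‖ = ‖(f 0 P - g 0 P) + g 0 (P - Q)‖ := by rw [map_sub]; abel_nf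
      _ ≤ ε * ‖y‖ + d * ε * ‖y‖ :=
        norm_add_le_of_le ((hfg 0 P).trans (by gcongr))
          ((hg 0 _).trans (ih (fun l => hf l.succ) (fun l => hg l.succ) fun l => hfg l.succ))
      _ = (d + 1 : ℕ) * ε * ‖y‖ := by push_cast; ring

variable {A : Module.End ℝ X}

lemma ergAvg_mem_contractions (hA : A ∈ contractions X) (N : ℕ) : ergAvg A N ∈ contractions X := by
  intro y
  have hN : (0 : ℝ) < N + 1 := by positivity
  have hsum := norm_sum_apply_le_card_mul (fun m _ => pow_mem hA m) y (s := range (N + 1))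
  rw [card_range, Nat.cast_succ] at hsum
  rw [ergAvg, LinearMap.smul_apply, norm_smul, norm_inv, Real.norm_of_nonneg hN.le,
    inv_mul_le_iff₀ hN]
  exact hsum

lemma norm_ergAvg_apply_sub_ergAvg_pow_apply_le (hA : A ∈ contractions X) (M q : ℕ) (y : X) :
    ‖ergAvg A M y - ergAvg A M ((A ^ q) y)‖ ≤ 2 * q / (M + 1) * ‖y‖ := by
  have hM : (0 : ℝ) < M + 1 := by positivity
  have hsum := norm_sum_apply_le_card_mul (fun i _ => pow_mem hA i) ((1 - A ^ (M + 1)) y)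
    (s := range q)
  rw [card_range] at hsum
  have hdiff : ‖(1 - A ^ (M + 1)) y‖ ≤ 2 * ‖y‖ := by
    rw [LinearMap.sub_apply, two_mul]
    exact norm_sub_le_of_le le_rfl (pow_mem hA _ y)
  have key : ergAvg A M y - ergAvg A M ((A ^ q) y)
      = ((M : ℝ) + 1)⁻¹ • (∑ i ∈ range q, A ^ i) ((1 - A ^ (M + 1)) y) := by
    simpa [mul_sub] using LinearMap.congr_fun (ergAvg_mul_one_sub_pow A M q) y
  rw [key, norm_smul, norm_inv, Real.norm_of_nonneg hM.le]
  calc ((M : ℝ) + 1)⁻¹ * ‖(∑ i ∈ range q, A ^ i) ((1 - A ^ (M + 1)) y)‖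
      ≤ ((M : ℝ) + 1)⁻¹ * (q * (2 * ‖y‖)) := by gcongr; exact hsum.trans (by gcongr)
    _ = 2 * q / (M + 1) * ‖y‖ := by field_simp

lemma norm_ergAvg_apply_sub_ergAvg_ergAvg_apply_le (hA : A ∈ contractions X) (M n : ℕ) (y : X) :
    ‖ergAvg A M y - ergAvg A M (ergAvg A n y)‖ ≤ n / (M + 1) * ‖y‖ := by
  set B := ergAvg A M
  have hn : (0 : ℝ) < n + 1 := by positivity
  have key : B y - B (ergAvg A n y)
      = ((n : ℝ) + 1)⁻¹ • ∑ q ∈ range (n + 1), (B y - B ((A ^ q) y)) := by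
    rw [sum_sub_distrib, sum_const, card_range, smul_sub, ← Nat.cast_smul_eq_nsmul ℝ, smul_smul,
      Nat.cast_succ, inv_mul_cancel₀ hn.ne', one_smul, ergAvg, LinearMap.smul_apply, map_smul,
      LinearMap.sum_apply, map_sum]
  have gauss : ∑ q ∈ range (n + 1), (q : ℝ) = n * (n + 1) / 2 := by
    have := Finset.sum_range_id_mul_two (n + 1)
    rw [Nat.add_sub_cancel] at this
    rw [← Nat.cast_sum, eq_div_iff two_ne_zero]
    exact_mod_cast this.trans (mul_comm _ _)
  rw [key, norm_smul, norm_inv, Real.norm_of_nonneg hn.le]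
  calc ((n : ℝ) + 1)⁻¹ * ‖∑ q ∈ range (n + 1), (B y - B ((A ^ q) y))‖
      ≤ ((n : ℝ) + 1)⁻¹ * ∑ q ∈ range (n + 1), 2 * q / (M + 1) * ‖y‖ := by
        gcongr
        exact norm_sum_le_of_le _ fun q _ => norm_ergAvg_apply_sub_ergAvg_pow_apply_le hA M q y
    _ = n / (M + 1) * ‖y‖ := by
        rw [← sum_mul, ← sum_div, ← mul_sum, gauss]
        field_simp

variable {d : ℕ} {T : Fin d → Module.End ℝ X}

lemma multiAvg_mem_contractions (hT : ∀ l, T l ∈ contractions X) (N : ℕ) :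
    multiAvg T N ∈ contractions X :=
  prod_ofFn_mem_contractions fun l => ergAvg_mem_contractions (hT l) N

lemma norm_multiAvg_apply_sub_multiAvg_multiAvg_apply_le (hcomm : ∀ l m, Commute (T l) (T m))
    (hT : ∀ l, T l ∈ contractions X) (N n : ℕ) (y : X) :
    ‖multiAvg T N y - multiAvg T N (multiAvg T n y)‖ ≤ d * (n / (N + 1)) * ‖y‖ := by
  rw [← Module.End.mul_apply]
  unfold multiAvg
  rw [List.prod_ofFn_mul_prod_ofFn _ _ fun l m _ => (hcomm l m).ergAvg N n]
  exact norm_prod_ofFn_apply_sub_le (by positivity) (fun l => ergAvg_mem_contractions (hT l) N)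
    (fun l => mul_mem (ergAvg_mem_contractions (hT l) N) (ergAvg_mem_contractions (hT l) n))
    (fun l => norm_ergAvg_apply_sub_ergAvg_ergAvg_apply_le (hT l) N n) y

lemma norm_erg_le (hT : ∀ l, T l ∈ contractions X) (x : X) (n : ℕ) : ‖erg T x n‖ ≤ ‖x‖ := by
  rw [erg_eq_multiAvg_apply]
  exact multiAvg_mem_contractions hT n x

lemma norm_erg_le_norm_erg_add (hcomm : ∀ l m, Commute (T l) (T m))
    (hT : ∀ l, T l ∈ contractions X) (x : X) (n i : ℕ) :
    ‖erg T x i‖ ≤ ‖erg T x n‖ + d * (n / (i + 1)) * ‖x‖ := by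
  simp only [erg_eq_multiAvg_apply]
  exact (norm_le_insert' _ (multiAvg T i (multiAvg T n x))).trans <|
    add_le_add (multiAvg_mem_contractions hT i _)
      (norm_multiAvg_apply_sub_multiAvg_multiAvg_apply_le hcomm hT i n x)

lemma norm_erg_le_norm_midpoint_add (hcomm : ∀ l m, Commute (T l) (T m))
    (hT : ∀ l, T l ∈ contractions X) (x : X) {i j c : ℕ} (hic : i ≤ c) (hjc : j ≤ c) (M : ℕ) :
    ‖erg T x M‖ ≤ ‖(2 : ℝ)⁻¹ • (erg T x i + erg T x j)‖ + d * (c / (M + 1)) * ‖x‖ := by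
  simp only [erg_eq_multiAvg_apply]
  set P := multiAvg T M
  have hbound : ∀ p ≤ c, ‖P x - P (multiAvg T p x)‖ ≤ d * (c / (M + 1)) * ‖x‖ := fun p hp =>
    (norm_multiAvg_apply_sub_multiAvg_multiAvg_apply_le hcomm hT M p x).trans (by gcongr)
  have hsplit : P x - P ((2 : ℝ)⁻¹ • (multiAvg T i x + multiAvg T j x))
      = (2 : ℝ)⁻¹ • ((P x - P (multiAvg T i x)) + (P x - P (multiAvg T j x))) := by
    rw [map_smul, map_add]
    module
  have hmid : ‖P x - P ((2 : ℝ)⁻¹ • (multiAvg T i x + multiAvg T j x))‖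
      ≤ d * (c / (M + 1)) * ‖x‖ := by
    rw [hsplit, norm_smul, norm_inv, Real.norm_two]
    linarith [norm_add_le (P x - P (multiAvg T i x)) (P x - P (multiAvg T j x)),
      hbound i hic, hbound j hjc]
  exact (norm_le_insert' _ _).trans (add_le_add (multiAvg_mem_contractions hT M _) hmid)

end Contractions

section Bounds

lemma Nat.two_mul_le_two_pow (d : ℕ) : 2 * d ≤ 2 ^ d := by
  rcases d with _ | d
  · simp
  · have := Nat.lt_two_pow_self (n := d)
    rw [pow_succ]
    omega

lemma le_Phi (d : ℕ) (δ : ℝ) (Q : ℕ) : Q ≤ Phi d δ Q := le_max_left _ _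

lemma Phi_mono (d : ℕ) {δ : ℝ} (hδ : 0 ≤ δ) : Monotone (Phi d δ) := fun p q hpq => by
  unfold Phi
  gcongr

lemma four_mul_le_mul_Phi {γ : ℝ} (hγ : 0 < γ) (d Q : ℕ) :
    4 * d * Q ≤ γ * Phi d (γ / 2) Q := by
  have hceil : (2 ^ d * Q : ℝ) / (γ / 2) ≤ Phi d (γ / 2) Q :=
    (Nat.le_ceil _).trans (Nat.cast_le.2 (le_max_right _ _))
  have hpow : (2 * d : ℝ) ≤ 2 ^ d := by exact_mod_cast Nat.two_mul_le_two_pow d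
  rw [div_le_iff₀ (by positivity)] at hceil
  nlinarith [(Nat.cast_nonneg Q : (0 : ℝ) ≤ Q)]

lemma sq_le_fPair (s : ℕ) : s ^ 2 ≤ fPair s := by
  unfold fPair
  nlinarith

lemma self_le_fPair (s : ℕ) : s ≤ fPair s :=
  (Nat.le_self_pow two_ne_zero s).trans (sq_le_fPair s)

lemma le_iterMax (g : ℕ → ℕ) {i n : ℕ} (hin : i ≤ n) : g i ≤ iterMax g n :=
  Finset.le_sup (mem_range_succ_iff.2 hin)

-- `Gfun ε g = Gseq g ⌈1/ε⌉₊`, so `Psi d γ g = Phi d (γ/2) (Gseq (hfun γ g d) ⌈1/(γ/2)⌉₊)`.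
def Gseq (g : ℕ → ℕ) (k : ℕ) : ℕ := (iterMax (fPair ∘ g))^[k] 0

lemma fPair_le_Gseq_succ (g : ℕ → ℕ) {n k : ℕ} (hn : n ≤ Gseq g k) :
    fPair (g n) ≤ Gseq g (k + 1) := by
  rw [Gseq, Function.iterate_succ_apply']
  exact le_iterMax (fPair ∘ g) hn

lemma Gseq_mono {g : ℕ → ℕ} (hg : ∀ n, n ≤ g n) : Monotone (Gseq g) :=
  monotone_nat_of_le_succ fun _ =>
    ((hg _).trans (self_le_fPair _)).trans (fPair_le_Gseq_succ g le_rfl)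

lemma le_hfun (γ : ℝ) (g : ℕ → ℕ) (d n : ℕ) : n ≤ hfun γ g d n :=
  (le_Phi d _ n).trans (Nat.le_add_right _ _)

lemma four_mul_hfun_le_mul_Gseq {γ : ℝ} (hγ : 0 < γ) (g : ℕ → ℕ) (d : ℕ) {k : ℕ} (hk : 1 ≤ k) :
    4 * d * hfun γ g d (Gseq (hfun γ g d) k) ≤ γ * (Gseq (hfun γ g d) (k + 1) + 1) := by
  set μ := Gseq (hfun γ g d)
  set H := hfun γ g d (μ k)
  rcases Nat.eq_zero_or_pos (μ k) with hμ | hμ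
  · have hH : H ≤ μ k := calc
      H = hfun γ g d 0 := by simp only [H, hμ]
      _ ≤ μ 1 := (self_le_fPair _).trans (fPair_le_Gseq_succ (hfun γ g d) le_rfl)
      _ ≤ μ k := Gseq_mono (le_hfun γ g d) hk
    have : H = 0 := by omega
    rw [this]
    simp only [Nat.cast_zero, mul_zero]
    positivity
  · have h4d : 4 * d ≤ γ * H := calc
      (4 * d : ℝ) ≤ 4 * d * μ k := le_mul_of_one_le_right (by positivity) (by exact_mod_cast hμ)
      _ ≤ γ * Phi d (γ / 2) (μ k) := four_mul_le_mul_Phi hγ d (μ k)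
      _ ≤ γ * H := by gcongr; exact_mod_cast Nat.le_add_right _ _
    have hHsq : (H : ℝ) ^ 2 ≤ μ (k + 1) := by
      exact_mod_cast (sq_le_fPair H).trans (fPair_le_Gseq_succ (hfun γ g d) le_rfl)
    nlinarith [(Nat.cast_nonneg H : (0 : ℝ) ≤ H)]

end Bounds

section NearMinimality

variable {X : Type*} [NormedAddCommGroup X] [NormedSpace ℝ X] {d : ℕ}
  {T : Fin d → Module.End ℝ X}

lemma norm_erg_le_add_of_Phi_le (hcomm : ∀ l m, Commute (T l) (T m))
    (hT : ∀ l, T l ∈ contractions X) {x : X} (hx : ‖x‖ ≤ 1) {γ : ℝ} (hγ : 0 < γ) {n i : ℕ}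
    (hni : Phi d (γ / 2) n ≤ i) : ‖erg T x i‖ ≤ ‖erg T x n‖ + γ / 4 := by
  have hi : (0 : ℝ) < i + 1 := by positivity
  have hloss : d * (n / (i + 1 : ℝ)) ≤ γ / 4 := by
    rw [mul_div_assoc', div_le_iff₀ hi]
    have := four_mul_le_mul_Phi hγ d n
    have : (Phi d (γ / 2) n : ℝ) ≤ i := by exact_mod_cast hni
    nlinarith
  have := norm_erg_le_norm_erg_add hcomm hT x n i
  nlinarith [norm_nonneg x, show 0 ≤ d * (n / (i + 1 : ℝ)) by positivity]

lemma norm_erg_lt_sub_of_midpoint_lt (hcomm : ∀ l m, Commute (T l) (T m))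
    (hT : ∀ l, T l ∈ contractions X) {x : X} (hx : ‖x‖ ≤ 1) {γ : ℝ} (hγ : 0 < γ)
    {n i j c M : ℕ} (hni : Phi d (γ / 2) n ≤ i) (hic : i ≤ c) (hjc : j ≤ c)
    (hloss : 4 * d * c ≤ γ * (M + 1))
    (hmid : ‖(2 : ℝ)⁻¹ • (erg T x i + erg T x j)‖ + γ < ‖erg T x i‖) :
    ‖erg T x M‖ < ‖erg T x n‖ - γ / 2 := by
  have hM : (0 : ℝ) < M + 1 := by positivity
  have hloss' : d * (c / (M + 1 : ℝ)) ≤ γ / 4 := by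
    rw [mul_div_assoc', div_le_iff₀ hM]
    linarith
  have := norm_erg_le_norm_midpoint_add hcomm hT x hic hjc M
  have := norm_erg_le_add_of_Phi_le hcomm hT hx hγ hni
  nlinarith [norm_nonneg x, show 0 ≤ d * (c / (M + 1 : ℝ)) by positivity]

lemma three_quarters_lt_norm_erg_of_midpoint_lt (hcomm : ∀ l m, Commute (T l) (T m))
    (hT : ∀ l, T l ∈ contractions X) {x : X} (hx : ‖x‖ ≤ 1) {γ : ℝ} (hγ : 0 < γ) {n i j : ℕ}
    (hni : Phi d (γ / 2) n ≤ i) (hmid : ‖(2 : ℝ)⁻¹ • (erg T x i + erg T x j)‖ + γ < ‖erg T x i‖) :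
    3 * γ / 4 < ‖erg T x n‖ := by
  linarith [norm_erg_le_add_of_Phi_le hcomm hT hx hγ hni,
    norm_nonneg ((2 : ℝ)⁻¹ • (erg T x i + erg T x j))]

end NearMinimality

theorem stmt8_general {X : Type*} [NormedAddCommGroup X] [NormedSpace ℝ X]
    (d : ℕ) (T : Fin d → X →ₗ[ℝ] X)
    (hcomm : ∀ l m, T l ∘ₗ T m = T m ∘ₗ T l)
    (hcontr : ∀ l (y : X), ‖T l y‖ ≤ ‖y‖)
    (x : X) (hx : ‖x‖ ≤ 1)
    (γ : ℝ) (hγ : 0 < γ) (g : ℕ → ℕ) :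
    ∃ N ≤ Psi d γ g, ∀ i ∈ Set.Icc N (N + g N), ∀ j ∈ Set.Icc N (N + g N),
      ‖erg T x i‖ ≤ ‖(2:ℝ)⁻¹ • (erg T x i + erg T x j)‖ + γ := by
  have hcomm : ∀ l m, Commute (T l) (T m) := hcomm
  have hT : ∀ l, T l ∈ contractions X := hcontr
  by_contra! hbad
  set μ := Gseq (hfun γ g d)
  set K := ⌈1 / (γ / 2)⌉₊
  have hbad_μ : ∀ k ≤ K, ∃ i ∈ Set.Icc (Phi d (γ / 2) (μ k)) (hfun γ g d (μ k)),
      ∃ j ∈ Set.Icc (Phi d (γ / 2) (μ k)) (hfun γ g d (μ k)),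
        ‖(2 : ℝ)⁻¹ • (erg T x i + erg T x j)‖ + γ < ‖erg T x i‖ := fun k hk =>
    hbad _ (Phi_mono d (by positivity) (Gseq_mono (le_hfun γ g d) hk))
  have hchain : ∀ k, 1 ≤ k → k ≤ K → ‖erg T x (μ k)‖ ≤ 1 - (k - 1) * (γ / 2) := by
    intro k hk
    induction k, hk using Nat.le_induction with
    | base => intro _; simpa using (norm_erg_le hT x _).trans hx
    | succ k hk ih =>
      intro hkK
      obtain ⟨i, ⟨hi, hic⟩, j, ⟨-, hjc⟩, hmid⟩ := hbad_μ k (by omega)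
      have := norm_erg_lt_sub_of_midpoint_lt hcomm hT hx hγ hi hic hjc
        (four_mul_hfun_le_mul_Gseq hγ g d hk) hmid
      push_cast
      linarith [ih (by omega)]
  have hK : 1 ≤ K := Nat.one_le_iff_ne_zero.2 (Nat.ceil_pos.2 (by positivity)).ne'
  have hKγ : 1 ≤ K * (γ / 2) := by
    rw [← div_le_iff₀ (by positivity)]
    exact Nat.le_ceil _
  obtain ⟨i, ⟨hi, -⟩, j, -, hmid⟩ := hbad_μ K le_rfl
  have := three_quarters_lt_norm_erg_of_midpoint_lt hcomm hT hx hγ hi hmid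
  linarith [hchain K hK le_rfl]

theorem stmt8 {X : Type*} [NormedAddCommGroup X] [NormedSpace ℝ X] [CompleteSpace X]
    (d : ℕ) (hd : 1 ≤ d) (T : Fin d → X →ₗ[ℝ] X)
    (hcomm : ∀ l m, T l ∘ₗ T m = T m ∘ₗ T l)
    (hcontr : ∀ l (y : X), ‖T l y‖ ≤ ‖y‖)
    (x : X) (hx : ‖x‖ ≤ 1)
    (γ : ℝ) (hγ : 0 < γ) (g : ℕ → ℕ) :
    ∃ N ≤ Psi d γ g, ∀ i ∈ Set.Icc N (N + g N), ∀ j ∈ Set.Icc N (N + g N),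
      ‖erg T x i‖ ≤ ‖(2:ℝ)⁻¹ • (erg T x i + erg T x j)‖ + γ :=
  stmt8_general d T hcomm hcontr x hx γ hγ g
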